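/- arXiv:1902.03498 — 2 statements merged into one kernel-verified Lean document; each statement's English description precedes it below -/
import Mathlib

section
/- Suppose x_1,...,x_{d-1} ∈ R^d, and a unit vector ŵ satisfies both ŵᵀ(x_i + c₄e₁/√d) > 0 and ŵᵀ(x_i − c₄e₁/√d) < 0 for every i = 1,...,d−1. Then ∑_{i=1}^{d-1} (ŵᵀx_i)² ≤ c₄². -/
/-!
Writing `u = (c₄/√d) e₁`, the two separation conditions trap `⟪w, xᵢ⟫` strictly between
`-⟪w, u⟫` and `⟪w, u⟫`, and `⟪w, u⟫ ≤ ‖u‖` for a unit vector `w`. Hence each term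
`⟪w, xᵢ⟫²` is below `‖u‖² = c₄²/d`, and the `d - 1` terms sum to at most `c₄²`.
-/

open RealInnerProductSpace

section SeparatingHyperplane

variable {E : Type*} [NormedAddCommGroup E] [InnerProductSpace ℝ E]

theorem abs_inner_lt_inner_of_inner_add_pos_of_inner_sub_neg {w v u : E}
    (hadd : 0 < ⟪w, v + u⟫) (hsub : ⟪w, v - u⟫ < 0) : |⟪w, v⟫| < ⟪w, u⟫ := by
  rw [inner_add_right] at hadd
  rw [inner_sub_right] at hsub
  exact abs_lt.mpr ⟨by linarith, by linarith⟩

theorem sq_inner_lt_norm_sq_of_inner_add_pos_of_inner_sub_neg {w v u : E} (hw : ‖w‖ = 1)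
    (hadd : 0 < ⟪w, v + u⟫) (hsub : ⟪w, v - u⟫ < 0) : ⟪w, v⟫ ^ 2 < ‖u‖ ^ 2 := by
  have hlt := abs_inner_lt_inner_of_inner_add_pos_of_inner_sub_neg hadd hsub
  have hle : ⟪w, u⟫ ≤ ‖u‖ := by simpa [hw] using real_inner_le_norm w u
  rw [← sq_abs]
  exact pow_lt_pow_left₀ (hlt.trans_le hle) (abs_nonneg _) two_ne_zero

end SeparatingHyperplane

theorem EuclideanSpace.norm_sq_smul_single_one {ι : Type*} [Fintype ι] [DecidableEq ι]
    (i : ι) (c : ℝ) : ‖c • EuclideanSpace.single i (1 : ℝ)‖ ^ 2 = c ^ 2 := by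
  simp [norm_smul]

theorem Nat.cast_sub_one_mul_div_le {d : ℕ} {a : ℝ} (ha : 0 ≤ a) : ((d - 1 : ℕ) : ℝ) * (a / d) ≤ a := by
  rcases Nat.eq_zero_or_pos d with rfl | hd
  · simpa using ha
  have hdR : (0 : ℝ) < d := by exact_mod_cast hd
  rw [mul_div_assoc', div_le_iff₀ hdR, mul_comm a]
  gcongr
  exact_mod_cast Nat.sub_le d 1

theorem separator_is_approximate_null_vector_general (d : ℕ) (hd : 0 < d)
    (x : Fin (d - 1) → EuclideanSpace ℝ (Fin d))
    (w : EuclideanSpace ℝ (Fin d)) (hw : ‖w‖ = 1)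
    (c₄ : ℝ)
    (hsep : ∀ i,
      0 < (inner ℝ w (x i + (c₄ / Real.sqrt d) •
            EuclideanSpace.single (⟨0, hd⟩ : Fin d) (1 : ℝ)) : ℝ) ∧
      (inner ℝ w (x i - (c₄ / Real.sqrt d) •
            EuclideanSpace.single (⟨0, hd⟩ : Fin d) (1 : ℝ)) : ℝ) < 0) :
    ∑ i, (inner ℝ w (x i) : ℝ) ^ 2 ≤ c₄ ^ 2 := by
  have hshift : ‖(c₄ / Real.sqrt d) • EuclideanSpace.single (⟨0, hd⟩ : Fin d) (1 : ℝ)‖ ^ 2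
      = c₄ ^ 2 / d := by
    rw [EuclideanSpace.norm_sq_smul_single_one, div_pow, Real.sq_sqrt d.cast_nonneg]
  have hterm : ∀ i, ⟪w, x i⟫ ^ 2 ≤ c₄ ^ 2 / d := fun i =>
    hshift ▸ (sq_inner_lt_norm_sq_of_inner_add_pos_of_inner_sub_neg hw (hsep i).1 (hsep i).2).le
  calc ∑ i, ⟪w, x i⟫ ^ 2 ≤ ∑ _i : Fin (d - 1), c₄ ^ 2 / d := Finset.sum_le_sum fun i _ => hterm i
    _ = ((d - 1 : ℕ) : ℝ) * (c₄ ^ 2 / d) := by simp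
    _ ≤ c₄ ^ 2 := Nat.cast_sub_one_mul_div_le (sq_nonneg c₄)

/-- If a unit vector `ŵ` satisfies `ŵᵀ(xᵢ + c₄ e₁/√d) > 0` and `ŵᵀ(xᵢ - c₄ e₁/√d) < 0`
for every `i = 1,…,d-1`, then `∑ᵢ (ŵᵀ xᵢ)² ≤ c₄²`. -/
theorem separator_is_approximate_null_vector (d : ℕ) (hd : 0 < d)
    (x : Fin (d - 1) → EuclideanSpace ℝ (Fin d))
    (w : EuclideanSpace ℝ (Fin d)) (hw : ‖w‖ = 1)
    (c₄ : ℝ) (hc₄ : 0 < c₄)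
    (hsep : ∀ i,
      0 < (inner ℝ w (x i + (c₄ / Real.sqrt d) •
            EuclideanSpace.single (⟨0, hd⟩ : Fin d) (1 : ℝ)) : ℝ) ∧
      (inner ℝ w (x i - (c₄ / Real.sqrt d) •
            EuclideanSpace.single (⟨0, hd⟩ : Fin d) (1 : ℝ)) : ℝ) < 0) :
    ∑ i, (inner ℝ w (x i) : ℝ) ^ 2 ≤ c₄ ^ 2 :=
  separator_is_approximate_null_vector_general d hd x w hw c₄ hsep
end

section
/- Let A be a d×d real matrix whose rows include the row e₁ᵀ, and let b be the vector with entry c_f > 0 in the coordinate corresponding to that row and 0 elsewhere. Suppose ŵ ∈ R^d satisfies ‖Aŵ − b‖² ≤ min(c₁c_f²/4, c_f²/4). Then ‖ŵ‖ ≥ c_f/2, and the normalized vector w = ŵ/‖ŵ‖ satisfies, for every other row θᵢᵀ of A, ∑_i (wᵀθ_i)² ≤ c₁. -/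
/-- Let `A` be a `d × d` real matrix whose row `i₀` is `e₁ᵀ`, and let
`b = c_f · e_{i₀}` with `c_f > 0`. If `ŵ` satisfies `‖A ŵ - b‖² ≤ min(c₁ c_f²/4, c_f²/4)`,
then `‖ŵ‖ ≥ c_f / 2`, and the normalized vector `w = ŵ/‖ŵ‖` satisfies
`∑_{i ≠ i₀} (wᵀ θᵢ)² ≤ c₁`, where `θᵢᵀ` are the other rows of `A`. -/
theorem regression_solution_is_approximate_null_vector (d : ℕ) (hd : 0 < d)
    (c₁ cf : ℝ) (hc₁ : 0 < c₁) (hcf : 0 < cf)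
    (A : Matrix (Fin d) (Fin d) ℝ) (i₀ : Fin d)
    (hrow : A i₀ = Pi.single (⟨0, hd⟩ : Fin d) (1 : ℝ))
    (b : Fin d → ℝ) (hb : b = Pi.single i₀ cf)
    (w : Fin d → ℝ)
    (hloss : ∑ j, (A.mulVec w j - b j) ^ 2 ≤ min (c₁ * cf ^ 2 / 4) (cf ^ 2 / 4)) :
    cf / 2 ≤ Real.sqrt (∑ j, (w j) ^ 2) ∧
      ∑ i ∈ Finset.univ.erase i₀,
        (A.mulVec ((Real.sqrt (∑ j, (w j) ^ 2))⁻¹ • w) i) ^ 2 ≤ c₁ := by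
  set z : Fin d := ⟨0, hd⟩ with hz
  -- the i₀-th entry of A.mulVec w is w z
  have hAw : A.mulVec w i₀ = w z := by
    simp [Matrix.mulVec, dotProduct, hrow, Pi.single_apply]
  have hbi : b i₀ = cf := by simp [hb]
  -- each term of the loss is bounded by the total
  have hterm : ∀ i : Fin d, (A.mulVec w i - b i) ^ 2 ≤ min (c₁ * cf ^ 2 / 4) (cf ^ 2 / 4) := by
    intro i
    refine le_trans ?_ hloss
    exact Finset.single_le_sum (f := fun j => (A.mulVec w j - b j) ^ 2)
      (fun j _ => sq_nonneg _) (Finset.mem_univ i)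
  have h1 : (w z - cf) ^ 2 ≤ cf ^ 2 / 4 := by
    have := hterm i₀
    rw [hAw, hbi] at this
    exact this.trans (min_le_right _ _)
  -- hence w z ≥ cf / 2
  have hwz : cf / 2 ≤ w z := by nlinarith [sq_nonneg (w z - cf), sq_nonneg (w z + cf)]
  -- sum of squares bound
  set S := ∑ j, (w j) ^ 2 with hS
  have hSz : (w z) ^ 2 ≤ S := by
    exact Finset.single_le_sum (f := fun j => (w j) ^ 2) (fun j _ => sq_nonneg _)
      (Finset.mem_univ z)
  have hSnonneg : 0 ≤ S := Finset.sum_nonneg fun j _ => sq_nonneg _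
  set s := Real.sqrt S with hs
  have hs2 : s ^ 2 = S := Real.sq_sqrt hSnonneg
  have hs1 : cf / 2 ≤ s := by
    have : (cf / 2) ^ 2 ≤ s ^ 2 := by
      rw [hs2]
      refine le_trans ?_ hSz
      nlinarith
    have hsnn : 0 ≤ s := Real.sqrt_nonneg _
    nlinarith
  refine ⟨hs1, ?_⟩
  have hspos : 0 < s := lt_of_lt_of_le (by positivity) hs1
  -- bound on ∑_{i ≠ i₀} (A.mulVec w i)^2
  have hsum : ∑ i ∈ Finset.univ.erase i₀, (A.mulVec w i) ^ 2 ≤ c₁ * cf ^ 2 / 4 := by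
    calc ∑ i ∈ Finset.univ.erase i₀, (A.mulVec w i) ^ 2
        = ∑ i ∈ Finset.univ.erase i₀, (A.mulVec w i - b i) ^ 2 := by
          refine Finset.sum_congr rfl fun i hi => ?_
          have hne : i ≠ i₀ := Finset.ne_of_mem_erase hi
          simp [hb, Pi.single_apply, hne]
      _ ≤ ∑ i, (A.mulVec w i - b i) ^ 2 :=
          Finset.sum_le_sum_of_subset_of_nonneg (Finset.erase_subset _ _)
            (fun i _ _ => sq_nonneg _)
      _ ≤ c₁ * cf ^ 2 / 4 := hloss.trans (min_le_left _ _)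
  have hscale : ∀ i, A.mulVec (s⁻¹ • w) i = s⁻¹ * A.mulVec w i := by
    intro i
    rw [Matrix.mulVec_smul]
    simp
  calc ∑ i ∈ Finset.univ.erase i₀, (A.mulVec (s⁻¹ • w) i) ^ 2
      = s⁻¹ ^ 2 * ∑ i ∈ Finset.univ.erase i₀, (A.mulVec w i) ^ 2 := by
        rw [Finset.mul_sum]
        refine Finset.sum_congr rfl fun i _ => ?_
        rw [hscale i]; ring
    _ ≤ s⁻¹ ^ 2 * (c₁ * cf ^ 2 / 4) := by
        apply mul_le_mul_of_nonneg_left hsum (by positivity)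
    _ ≤ c₁ := by
        have h4 : s⁻¹ ^ 2 ≤ 4 / cf ^ 2 := by
          rw [inv_pow]
          rw [inv_le_iff_one_le_mul₀ (by positivity)]
          calc (1:ℝ) = (4 / cf ^ 2) * ((cf/2) ^ 2) := by field_simp; ring
            _ ≤ (4 / cf ^ 2) * s ^ 2 := by
                apply mul_le_mul_of_nonneg_left _ (by positivity)
                nlinarith
        calc s⁻¹ ^ 2 * (c₁ * cf ^ 2 / 4) ≤ (4 / cf ^ 2) * (c₁ * cf ^ 2 / 4) := by
              apply mul_le_mul_of_nonneg_right h4 (by positivity)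
          _ = c₁ := by field_simp
end
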